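/- Let Γ be a finite connected simplicial graph with no SIL whose vertices are labeled by nontrivial cyclic groups. Then for any vertex v ∈ Γ₀, any vertex w, and any connected component D of Γ∖st(w), the following holds in G_{Γ̃}: p_{w,D} · p_v · p_{w,D}⁻¹ = p_v if v ∉ D, and p_{w,D} · p_v · p_{w,D}⁻¹ = p_w · p_v · p_w⁻¹ if v ∈ D. -/

import Mathlib

open Monoid

namespace ArXiv

universe u uG

variable {V : Type u}

/-- The star of a vertex: the vertex together with its neighbors. -/
def star (Γ : SimpleGraph V) (v : V) : Set V := insert v (Γ.neighborSet v)

/-- `C ⊆ V` is the vertex set of a connected component of the full subgraph of `Γ`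
induced on `S`. -/
def IsCompOf (Γ : SimpleGraph V) (S : Set V) (C : Set V) : Prop :=
  ∃ c : (Γ.induce S).ConnectedComponent, C = Subtype.val '' c.supp

/-- `Γ` has a separating intersection of links: there are distinct non-adjacent vertices
`v, w` such that some connected component of `Γ ∖ (lk(v) ∩ lk(w))` contains neither `v`
nor `w`. -/
def HasSIL (Γ : SimpleGraph V) : Prop :=
  ∃ v w : V, v ≠ w ∧ ¬ Γ.Adj v w ∧
    ∃ C : Set V, IsCompOf Γ ((Γ.neighborSet v ∩ Γ.neighborSet w)ᶜ) C ∧ v ∉ C ∧ w ∉ C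

variable (Γ : SimpleGraph V) (G : V → Type uG) [∀ v, Group (G v)]

/-- The commutator relators defining the graph product. -/
def rels : Set (Monoid.CoprodI G) :=
  {x | ∃ (v w : V) (_ : Γ.Adj v w) (g : G v) (h : G w),
    x = CoprodI.of g * CoprodI.of h * (CoprodI.of g)⁻¹ * (CoprodI.of h)⁻¹}

/-- The graph product of the vertex groups `G v` over the graph `Γ`: the quotient of the
free product by the normal closure of the commutators of adjacent vertex groups. -/
def GraphProduct : Type (max u uG) :=
  Monoid.CoprodI G ⧸ Subgroup.normalClosure (rels Γ G)

instance : Group (GraphProduct Γ G) :=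
  inferInstanceAs (Group (Monoid.CoprodI G ⧸ Subgroup.normalClosure (rels Γ G)))

/-- The canonical map from a vertex group into the graph product. -/
def of {v : V} : G v →* GraphProduct Γ G :=
  (QuotientGroup.mk' (Subgroup.normalClosure (rels Γ G))).comp CoprodI.of

theorem of_commute {v w : V} (h : Γ.Adj v w) (g : G v) (k : G w) :
    Commute (of Γ G g) (of Γ G k) := by
  rw [← commutatorElement_eq_one_iff_commute]
  have hmem : (CoprodI.of g * CoprodI.of k * (CoprodI.of g)⁻¹ * (CoprodI.of k)⁻¹ :
      Monoid.CoprodI G) ∈ Subgroup.normalClosure (rels Γ G) :=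
    Subgroup.subset_normalClosure ⟨v, w, h, g, k, rfl⟩
  have h1 : (QuotientGroup.mk' (Subgroup.normalClosure (rels Γ G)))
      (CoprodI.of g * CoprodI.of k * (CoprodI.of g)⁻¹ * (CoprodI.of k)⁻¹) = 1 :=
    (QuotientGroup.eq_one_iff _).mpr hmem
  simp only [map_mul, map_inv] at h1
  first
    | simpa [commutatorElement_def, of, MonoidHom.comp_apply] using h1
    | (simp only [commutatorElement_def, of, MonoidHom.comp_apply]; exact h1)
    | exact h1

/-- `π` is the partial conjugation `π_{v,C}`, for vertex groups with chosen generators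
`gen`: it conjugates the generators in `C` by (the generator of) `v` and fixes all other
generators. -/
def IsPartialConj (gen : ∀ v, G v) (π : MulAut (GraphProduct Γ G)) (v : V) (C : Set V) :
    Prop :=
  (∀ u ∈ C, ∀ g : G u, π (of Γ G g) = of Γ G (gen v) * of Γ G g * (of Γ G (gen v))⁻¹) ∧
  (∀ u ∉ C, ∀ g : G u, π (of Γ G g) = of Γ G g)

/-- `π` is the partial conjugation `π_{a,C}` by the element `a` of the vertex group `G v`:
it conjugates the vertex groups in `C` by `a` and fixes all other vertex groups. -/
def IsPartialConjBy {v : V} (a : G v) (π : MulAut (GraphProduct Γ G)) (C : Set V) : Prop :=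
  (∀ u ∈ C, ∀ g : G u, π (of Γ G g) = of Γ G a * of Γ G g * (of Γ G a)⁻¹) ∧
  (∀ u ∉ C, ∀ g : G u, π (of Γ G g) = of Γ G g)

/-- The vertex set of the graph `Γ̃`: pairs `p_{v,C}` where `C` is a connected component
of `Γ ∖ st(v)`. -/
def TV : Type u := {p : V × Set V // IsCompOf Γ ((star Γ p.1)ᶜ) p.2}

/-- The graph `Γ̃`: vertices `p_{v,C}` and `p_{w,D}` are joined by an edge unless
`v, w` are distinct non-adjacent vertices with `v ∈ D` and `w ∈ C`. -/
def tilde : SimpleGraph (TV Γ) where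
  Adj p q := p ≠ q ∧
    ¬(p.1.1 ≠ q.1.1 ∧ ¬ Γ.Adj p.1.1 q.1.1 ∧ p.1.1 ∈ q.1.2 ∧ q.1.1 ∈ p.1.2)
  symm := ⟨by
    rintro p q ⟨h1, h2⟩
    exact ⟨h1.symm, fun ⟨a, b, c, d⟩ => h2 ⟨a.symm, fun e => b e.symm, d, c⟩⟩⟩
  loopless := ⟨fun p h => h.1 rfl⟩

/-- The graph product `G_{Γ̃}`, where the vertex `p_{v,C}` is labeled by (a copy of) the
group `G v`. -/
abbrev TildeProduct : Type (max u uG) :=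
  GraphProduct (tilde Γ) (fun p : TV Γ => G p.1.1)

/-- The element `p_v = ∏_C p_{v,C} ∈ G_{Γ̃}`, the product over all connected components
`C` of `Γ ∖ st(v)` (the factors pairwise commute). -/
noncomputable def pvert [Finite V] (gen : ∀ v, G v) (v : V) : TildeProduct Γ G :=
  haveI : Fintype {C : Set V // IsCompOf Γ ((star Γ v)ᶜ) C} := Fintype.ofFinite _
  Finset.noncommProd (Finset.univ : Finset {C : Set V // IsCompOf Γ ((star Γ v)ᶜ) C})
    (fun c => of (tilde Γ) (fun p : TV Γ => G p.1.1) (v := ⟨(v, c.1), c.2⟩) (gen v))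
    (by
      intro a _ b _ hab
      have hadj : (tilde Γ).Adj ⟨(v, a.1), a.2⟩ ⟨(v, b.1), b.2⟩ := by
        refine ⟨fun h => hab (Subtype.ext (congrArg (fun x : TV Γ => x.1.2) h)), ?_⟩
        rintro ⟨hne, -⟩
        exact hne rfl
      exact of_commute (tilde Γ) (fun p : TV Γ => G p.1.1) hadj (gen v) (gen v))

/-- The set `Δ` of vertices adjacent to every other vertex of `Γ`. -/
def Delta (Γ : SimpleGraph V) : Set V := {v | ∀ u, u ≠ v → Γ.Adj v u}

/-- The subgroup of the graph product generated by the vertex groups `G v`, `v ∈ T`. -/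
def vertexSubgroup (T : Set V) : Subgroup (GraphProduct Γ G) :=
  Subgroup.closure {x | ∃ v ∈ T, ∃ g : G v, x = of Γ G g}

/-- `w` is a reduced word for the element `g` of the graph product: a minimal length
expression of `g` as a product of nontrivial elements of vertex groups. -/
def IsReducedWord (g : GraphProduct Γ G) (w : List (Σ v : V, G v)) : Prop :=
  (w.map fun l => of Γ G l.2).prod = g ∧ (∀ l ∈ w, l.2 ≠ 1) ∧
    ∀ w' : List (Σ v : V, G v), (w'.map fun l => of Γ G l.2).prod = g →
      w.length ≤ w'.length

/-!
Two generators `p_{w,D}` and `p_{v,C}` of `G_{Γ̃}` fail to commute only when `v ∈ D` and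
`w ∈ C`. Hence if `v ∉ D`, then `p_{w,D}` commutes with every factor of `p_v`. If `v ∈ D`, the
remaining factors `p_{w,E}`, `E ≠ D`, of `p_w` have `v ∉ E` because distinct components are
disjoint, so they commute with `p_v`, and conjugating `p_v` by `p_w` is the same as conjugating
it by `p_{w,D}`.
-/

variable {Γ G}

theorem IsCompOf.eq_of_mem {S C D : Set V} (hC : IsCompOf Γ S C)
    (hD : IsCompOf Γ S D) {x : V} (hxC : x ∈ C) (hxD : x ∈ D) : C = D := by
  obtain ⟨c, rfl⟩ := hC
  obtain ⟨d, rfl⟩ := hD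
  obtain ⟨y, hy, rfl⟩ := hxC
  obtain ⟨z, hz, hzy⟩ := hxD
  obtain rfl : z = y := Subtype.ext hzy
  rw [SimpleGraph.ConnectedComponent.mem_supp_iff] at hy hz
  rw [← hy, hz]

theorem commute_of_gen_of_not_mem (gen : ∀ v, G v) {p q : TV Γ} (h : q.1.1 ∉ p.1.2) :
    Commute (of (tilde Γ) (fun r : TV Γ => G r.1.1) (gen p.1.1))
      (of (tilde Γ) (fun r : TV Γ => G r.1.1) (gen q.1.1)) := by
  by_cases hpq : p = q
  · subst hpq
    rfl
  · exact of_commute (tilde Γ) (fun r : TV Γ => G r.1.1) ⟨hpq, fun hqp => h hqp.2.2.2⟩ _ _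

section Pvert

variable [Finite V]

theorem commute_pvert (gen : ∀ v, G v) (v : V) {x : TildeProduct Γ G}
    (h : ∀ C (hC : IsCompOf Γ ((star Γ v)ᶜ) C),
      Commute x (of (tilde Γ) (fun p : TV Γ => G p.1.1) (v := ⟨(v, C), hC⟩) (gen v))) :
    Commute x (pvert Γ G gen v) :=
  Finset.noncommProd_commute _ _ _ _ fun c _ => h c.1 c.2

theorem commute_gen_pvert_of_not_mem (gen : ∀ v, G v) {v w : V} {D : Set V}
    (hD : IsCompOf Γ ((star Γ w)ᶜ) D) (hvD : v ∉ D) :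
    Commute (of (tilde Γ) (fun q : TV Γ => G q.1.1) (v := ⟨(w, D), hD⟩) (gen w))
      (pvert Γ G gen v) :=
  commute_pvert gen v fun _ _ => commute_of_gen_of_not_mem gen hvD

theorem exists_pvert_eq_gen_mul_commute (gen : ∀ v, G v) {v w : V} {D : Set V}
    (hD : IsCompOf Γ ((star Γ w)ᶜ) D) (hvD : v ∈ D) :
    ∃ r : TildeProduct Γ G,
      pvert Γ G gen w = of (tilde Γ) (fun q : TV Γ => G q.1.1) (v := ⟨(w, D), hD⟩) (gen w) * r ∧
        Commute r (pvert Γ G gen v) := by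
  classical
  let : Fintype {C : Set V // IsCompOf Γ ((star Γ w)ᶜ) C} := Fintype.ofFinite _
  have hDuniv : (⟨D, hD⟩ : {C : Set V // IsCompOf Γ ((star Γ w)ᶜ) C}) ∈ Finset.univ :=
    Finset.mem_univ _
  refine ⟨_, (Finset.mul_noncommProd_erase _ hDuniv _ _).symm, ?_⟩
  refine (Finset.noncommProd_commute _ _ _ _ fun E hE => ?_).symm
  refine (commute_gen_pvert_of_not_mem gen E.2 fun hvE => ?_).symm
  exact (Finset.mem_erase.mp hE).1 (Subtype.ext (E.2.eq_of_mem hD hvE hvD))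

end Pvert

theorem pwD_conj_pvert_general {V : Type u} [Finite V] (Γ : SimpleGraph V)
    (G : V → Type uG) [∀ v, Group (G v)]
    (gen : ∀ v, G v)
    (v : V) (w : V) (D : Set V) (hD : IsCompOf Γ ((star Γ w)ᶜ) D) :
    (v ∉ D →
      of (tilde Γ) (fun q : TV Γ => G q.1.1) (v := ⟨(w, D), hD⟩) (gen w) *
          pvert Γ G gen v *
          (of (tilde Γ) (fun q : TV Γ => G q.1.1) (v := ⟨(w, D), hD⟩) (gen w))⁻¹ =
        pvert Γ G gen v) ∧
    (v ∈ D →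
      of (tilde Γ) (fun q : TV Γ => G q.1.1) (v := ⟨(w, D), hD⟩) (gen w) *
          pvert Γ G gen v *
          (of (tilde Γ) (fun q : TV Γ => G q.1.1) (v := ⟨(w, D), hD⟩) (gen w))⁻¹ =
        pvert Γ G gen w * pvert Γ G gen v * (pvert Γ G gen w)⁻¹) := by
  refine ⟨fun hvD => (commute_gen_pvert_of_not_mem gen hD hvD).mul_inv_cancel, fun hvD => ?_⟩
  obtain ⟨r, hr, hrv⟩ := exists_pvert_eq_gen_mul_commute gen hD hvD
  set x := of (tilde Γ) (fun q : TV Γ => G q.1.1) (v := ⟨(w, D), hD⟩) (gen w)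
  calc x * pvert Γ G gen v * x⁻¹
      = x * (r * pvert Γ G gen v * r⁻¹) * x⁻¹ := by rw [hrv.mul_inv_cancel]
    _ = (x * r) * pvert Γ G gen v * (x * r)⁻¹ := by group
    _ = pvert Γ G gen w * pvert Γ G gen v * (pvert Γ G gen w)⁻¹ := by rw [hr]

/-- For `v ∈ Γ₀`, any vertex `w` and any component `D` of `Γ ∖ st(w)`:
`p_{w,D} p_v p_{w,D}⁻¹ = p_v` if `v ∉ D`, and `p_{w,D} p_v p_{w,D}⁻¹ = p_w p_v p_w⁻¹` if
`v ∈ D`. -/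
theorem pwD_conj_pvert {V : Type u} [Finite V] (Γ : SimpleGraph V)
    (hconn : Γ.Connected) (hsil : ¬ HasSIL Γ)
    (G : V → Type uG) [∀ v, Group (G v)] [∀ v, Nontrivial (G v)]
    (gen : ∀ v, G v) (hgen : ∀ v, Subgroup.zpowers (gen v) = ⊤)
    (v : V) (hv : v ∉ Delta Γ) (w : V) (D : Set V) (hD : IsCompOf Γ ((star Γ w)ᶜ) D) :
    (v ∉ D →
      of (tilde Γ) (fun q : TV Γ => G q.1.1) (v := ⟨(w, D), hD⟩) (gen w) *
          pvert Γ G gen v *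
          (of (tilde Γ) (fun q : TV Γ => G q.1.1) (v := ⟨(w, D), hD⟩) (gen w))⁻¹ =
        pvert Γ G gen v) ∧
    (v ∈ D →
      of (tilde Γ) (fun q : TV Γ => G q.1.1) (v := ⟨(w, D), hD⟩) (gen w) *
          pvert Γ G gen v *
          (of (tilde Γ) (fun q : TV Γ => G q.1.1) (v := ⟨(w, D), hD⟩) (gen w))⁻¹ =
        pvert Γ G gen w * pvert Γ G gen v * (pvert Γ G gen w)⁻¹) :=
  pwD_conj_pvert_general Γ G gen v w D hD

end ArXiv
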